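/- arXiv:1604.04408 — 5 statements merged into one kernel-verified Lean document; each statement's English description precedes it below -/
import Mathlib

section
/- If a sequence (e_α)_{α<λ} of nonzero vectors in a real Banach space is modular unconditional — i.e., for every finite set A ⊂ λ, every γ < λ with γ ∉ A, and all real coefficients, ‖Σ_{α∈A} c_α e_α‖ ≤ ‖Σ_{α∈A} d_α e_α‖ implies ‖Σ_{α∈A} c_α e_α + e_γ‖ ≤ ‖Σ_{α∈A} d_α e_α + e_γ‖ — then it is 1-unconditional: for every finite A ⊂ λ, coefficients (c_α), and signs θ ∈ {±1}^A, ‖Σ_{α∈A} c_α e_α‖ ≤ ‖Σ_{α∈A} θ(α) c_α e_α‖. -/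
open Finset

/-- A modular unconditional sequence of nonzero vectors is 1-unconditional. -/
theorem modular_unconditional_implies_one_unconditional
    {X : Type*} [NormedAddCommGroup X] [NormedSpace ℝ X] [CompleteSpace X]
    {ι : Type*} (e : ι → X) (hne : ∀ α, e α ≠ 0)
    (hmod : ∀ (A : Finset ι) (γ : ι), γ ∉ A → ∀ c d : ι → ℝ,
      ‖∑ α ∈ A, c α • e α‖ ≤ ‖∑ α ∈ A, d α • e α‖ →
      ‖(∑ α ∈ A, c α • e α) + e γ‖ ≤ ‖(∑ α ∈ A, d α • e α) + e γ‖) :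
    ∀ (A : Finset ι) (c θ : ι → ℝ), (∀ α ∈ A, θ α = 1 ∨ θ α = -1) →
      ‖∑ α ∈ A, c α • e α‖ ≤ ‖∑ α ∈ A, (θ α * c α) • e α‖ := by
  classical
  -- Step 1: symmetry of the unit shift
  have hsym : ∀ (s : Finset ι) (γ : ι), γ ∉ s → ∀ d : ι → ℝ,
      ‖(∑ α ∈ s, d α • e α) + e γ‖ = ‖(∑ α ∈ s, (-(d α)) • e α) + e γ‖ := by
    intro s γ hγ d
    have h1 : ‖∑ α ∈ s, (-(d α)) • e α‖ = ‖∑ α ∈ s, d α • e α‖ := by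
      simp only [neg_smul]
      rw [Finset.sum_neg_distrib, norm_neg]
    exact le_antisymm (hmod s γ hγ d (fun α => -(d α)) h1.ge)
      (hmod s γ hγ (fun α => -(d α)) d h1.le)
  -- Step 2: flipping the coefficient of one extra vector preserves the norm
  have hflip : ∀ (s : Finset ι) (γ : ι), γ ∉ s → ∀ (d : ι → ℝ) (t : ℝ),
      ‖(∑ α ∈ s, d α • e α) + t • e γ‖ = ‖(∑ α ∈ s, d α • e α) - t • e γ‖ := by
    intro s γ hγ d t
    rcases eq_or_ne t 0 with rfl | ht
    · simp
    · have h2 : (∑ α ∈ s, d α • e α) + t • e γ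
          = t • ((∑ α ∈ s, (t⁻¹ * d α) • e α) + e γ) := by
        rw [smul_add, Finset.smul_sum]
        congr 1
        refine Finset.sum_congr rfl fun α _ => ?_
        rw [smul_smul, mul_inv_cancel_left₀ ht]
      have h3 : (∑ α ∈ s, d α • e α) - t • e γ
          = (-t) • ((∑ α ∈ s, (-(t⁻¹ * d α)) • e α) + e γ) := by
        rw [smul_add, Finset.smul_sum]
        rw [sub_eq_add_neg]
        congr 1
        · refine Finset.sum_congr rfl fun α _ => ?_
          rw [smul_smul]
          ring_nf
          rw [mul_inv_cancel₀ ht, one_mul]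
        · rw [neg_smul]
      rw [h2, h3, norm_smul, norm_smul, norm_neg, hsym s γ hγ (fun α => t⁻¹ * d α)]
  -- Step 3: flipping signs on any subset preserves the norm
  have hflips : ∀ (B A : Finset ι), B ⊆ A → ∀ c : ι → ℝ,
      ‖∑ α ∈ A, (if α ∈ B then -c α else c α) • e α‖ = ‖∑ α ∈ A, c α • e α‖ := by
    intro B
    induction B using Finset.induction_on with
    | empty => intro A _ c; simp
    | @insert b B hb ih =>
      intro A hBA c
      have hbA : b ∈ A := hBA (mem_insert_self b B)
      have hBA' : B ⊆ A := fun x hx => hBA (mem_insert_of_mem hx)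
      have hbe : b ∉ A.erase b := notMem_erase b A
      have hcongr : ∀ (g : ι → ℝ), ∑ α ∈ A.erase b, (if α ∈ insert b B then -g α else g α) • e α
          = ∑ α ∈ A.erase b, (if α ∈ B then -g α else g α) • e α := by
        intro g
        refine Finset.sum_congr rfl fun α hα => ?_
        have hne' : α ≠ b := (Finset.mem_erase.mp hα).1
        simp [Finset.mem_insert, hne']
      have key : ‖∑ α ∈ A, (if α ∈ insert b B then -c α else c α) • e α‖
          = ‖∑ α ∈ A, (if α ∈ B then -c α else c α) • e α‖ := by
        rw [← Finset.insert_erase hbA, Finset.sum_insert hbe, Finset.sum_insert hbe, hcongr]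
        simp only [Finset.mem_insert, true_or, if_true, hb, if_false]
        rw [add_comm ((-c b) • e b), add_comm (c b • e b), neg_smul, ← sub_eq_add_neg]
        exact (hflip (A.erase b) b hbe _ (c b)).symm
      rw [key, ih A hBA' c]
  -- Conclusion
  intro A c θ hθ
  have hB : A.filter (fun α => θ α = -1) ⊆ A := Finset.filter_subset _ _
  have heq : ∑ α ∈ A, (θ α * c α) • e α
      = ∑ α ∈ A, (if α ∈ A.filter (fun α => θ α = -1) then -c α else c α) • e α := by
    refine Finset.sum_congr rfl fun α hα => ?_
    rcases hθ α hα with h1 | h1 <;>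
      simp [Finset.mem_filter, hα, h1, (by norm_num : (1:ℝ) ≠ -1)]
  rw [heq, hflips _ A hB c]
end

section
/- Let X and Y be Banach spaces and T : Y → X a continuous linear operator with dense range. If Y has property (σ) — every countable intersection of coseparable closed subspaces of Y is coseparable — then X also has property (σ). Equivalently stated via the kernel characterization: if for every sequence (g_n) ⊂ Y* the subspace ⋂_n ker(g_n) is coseparable in Y, then for every sequence (f_n) ⊂ X* the subspace ⋂_n ker(f_n) is coseparable in X. -/
open TopologicalSpace

theorem Submodule.separableSpace_quotient_of_denseRange
    {R M N : Type*} [Ring R] [AddCommGroup M] [Module R M] [TopologicalSpace M]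
    [AddCommGroup N] [Module R N] [TopologicalSpace N]
    {T : M →L[R] N} (hT : DenseRange T) (Z : Submodule R N)
    [SeparableSpace (M ⧸ Z.comap (T : M →ₗ[R] N))] : SeparableSpace (N ⧸ Z) := by
  let φ := (Z.comap (T : M →ₗ[R] N)).liftQL (Z.mkQL.comp T) fun x hx ↦ by
    simpa [Submodule.Quotient.mk_eq_zero] using hx
  have hdense : DenseRange (φ ∘ (Z.comap (T : M →ₗ[R] N)).mkQ) :=
    Z.mkQ_surjective.denseRange.comp hT Z.continuous_mkQ
  exact DenseRange.separableSpace (hdense.mono (Set.range_comp_subset_range _ _)) φ.continuous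

theorem property_sigma_of_sigma_generated_general
    {X Y : Type*} [NormedAddCommGroup X] [NormedSpace ℝ X]
    [NormedAddCommGroup Y] [NormedSpace ℝ Y]
    (T : Y →L[ℝ] X) (hT : DenseRange T)
    (hσ : ∀ g : ℕ → (Y →L[ℝ] ℝ),
      TopologicalSpace.SeparableSpace (Y ⧸ (⨅ n, LinearMap.ker (g n : Y →ₗ[ℝ] ℝ)))) :
    ∀ f : ℕ → (X →L[ℝ] ℝ),
      TopologicalSpace.SeparableSpace (X ⧸ (⨅ n, LinearMap.ker (f n : X →ₗ[ℝ] ℝ))) := by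
  intro f
  have hker : ⨅ n, LinearMap.ker ((f n).comp T : Y →ₗ[ℝ] ℝ) =
      (⨅ n, LinearMap.ker (f n : X →ₗ[ℝ] ℝ)).comap (T : Y →ₗ[ℝ] X) := by
    simp only [Submodule.comap_iInf, ← LinearMap.ker_comp]; rfl
  have hsep := hσ fun n ↦ (f n).comp T
  rw [hker] at hsep
  exact Submodule.separableSpace_quotient_of_denseRange hT _

/-- Property (σ) passes from `Y` to `X` along a continuous linear operator with dense range. -/
theorem property_sigma_of_sigma_generated
    {X Y : Type*} [NormedAddCommGroup X] [NormedSpace ℝ X] [CompleteSpace X]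
    [NormedAddCommGroup Y] [NormedSpace ℝ Y] [CompleteSpace Y]
    (T : Y →L[ℝ] X) (hT : DenseRange T)
    (hσ : ∀ g : ℕ → (Y →L[ℝ] ℝ),
      TopologicalSpace.SeparableSpace (Y ⧸ (⨅ n, LinearMap.ker (g n : Y →ₗ[ℝ] ℝ)))) :
    ∀ f : ℕ → (X →L[ℝ] ℝ),
      TopologicalSpace.SeparableSpace (X ⧸ (⨅ n, LinearMap.ker (f n : X →ₗ[ℝ] ℝ))) :=
  property_sigma_of_sigma_generated_general T hT hσ
end

section
/- If X is a Banach space that is coseparable in its bidual (i.e., X**/X is separable under the canonical embedding), then for every separable closed subspace Y ⊂ X, the double annihilator Y^⊥⊥ ⊂ X** is norm-separable, and for every coseparable closed subspace Y ⊂ X, the subspace Y^⊥⊥ ⊂ X** is coseparable in X**. -/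
open NormedSpace

variable {E : Type*} [NormedAddCommGroup E] [NormedSpace ℝ E]

/-- The annihilator of a submodule inside the continuous dual. -/
noncomputable def annih (Y : Submodule ℝ E) : Submodule ℝ (E →L[ℝ] ℝ) where
  carrier := {f | ∀ y ∈ Y, f y = 0}
  add_mem' := by intro f g hf hg y hy; simp [hf y hy, hg y hy]
  zero_mem' := by intro y hy; simp
  smul_mem' := by intro c f hf y hy; simp [hf y hy]

/-!
Write `J : X → X**` for the canonical embedding and `Z = Y^⊥⊥`. Hahn–Banach in `X/Y` gives
`dist(x, Y) ≤ ‖F - J x‖` for `F ∈ Z`, so a point of `Z` close to `l + J X` with `l ∈ Z` is close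
to `l + J Y`. Taking a countable `L ⊆ Z` whose classes are dense in the image of `Z` in the
separable space `X**/J X` therefore makes `L + J Y` dense in `Z`.

For the quotient, `X**/Z` is the closure of the image of `L + J X` for a countable `L` that is
dense modulo `J X`, and the image of `J X` in `X**/Z` factors through the separable space `X/Y`
because `J Y ⊆ Z`.
-/

open Set TopologicalSpace
open scoped Pointwise

theorem TopologicalSpace.IsSeparable.add {G : Type*} [TopologicalSpace G] [Add G] [ContinuousAdd G]
    {s t : Set G} (hs : IsSeparable s) (ht : IsSeparable t) : IsSeparable (s + t) := by
  simpa only [image_prod, image2_add] using (hs.prod ht).image continuous_add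

namespace Submodule

variable {R M : Type*} [Ring R] [SeminormedAddCommGroup M] [Module R M] {N : Submodule R M}

theorem exists_mem_norm_sub_lt_of_norm_mkQ_lt {x : M} {ε : ℝ} (h : ‖N.mkQ x‖ < ε) :
    ∃ y ∈ N, ‖x - y‖ < ε := by
  obtain ⟨m, hm, hmε⟩ := QuotientAddGroup.norm_lt_iff.1 h
  exact ⟨x - m, by simpa using (Quotient.eq N).1 hm.symm, by simpa using hmε⟩

variable (N) in
theorem exists_countable_subset_closure_add {S : Set M} (hS : IsSeparable (N.mkQ '' S)) :
    ∃ L ⊆ S, L.Countable ∧ S ⊆ closure (L + (N : Set M)) := by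
  obtain ⟨C, hCS, hC, hSC⟩ := hS.exists_countable_dense_subset
  obtain ⟨L, hLS, hL⟩ := exists_subset_bijOn (S ∩ N.mkQ ⁻¹' C) N.mkQ
  rw [image_inter_preimage, inter_eq_right.2 hCS] at hL
  refine ⟨L, hLS.trans inter_subset_left,
    countable_of_injective_of_countable_image hL.injOn (hL.image_eq ▸ hC), fun x hx ↦ ?_⟩
  refine Metric.mem_closure_iff.2 fun ε hε ↦ ?_
  obtain ⟨_, hlC, hl⟩ := Metric.mem_closure_iff.1 (hSC (mem_image_of_mem _ hx)) ε hε
  obtain ⟨l, hlL, rfl⟩ := hL.surjOn hlC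
  rw [dist_eq_norm, ← map_sub] at hl
  obtain ⟨y, hyN, hy⟩ := exists_mem_norm_sub_lt_of_norm_mkQ_lt hl
  exact ⟨l + y, add_mem_add hlL hyN, by rwa [dist_eq_norm, ← sub_sub]⟩

theorem separableSpace_quotient_of_isSeparable_image {K : Submodule R M}
    [SeparableSpace (M ⧸ K)] (hN : IsSeparable (N.mkQ '' K)) : SeparableSpace (M ⧸ N) := by
  obtain ⟨L, -, hL, hLK⟩ := K.exists_countable_subset_closure_add (S := univ) (.of_separableSpace _)
  rw [← isSeparable_univ_iff]
  refine (isSeparable_closure.2 ((hL.image N.mkQ).isSeparable.add hN)).mono fun q _ ↦ ?_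
  obtain ⟨x, rfl⟩ := N.mkQ_surjective q
  rw [← image_add N.mkQ]
  exact image_closure_subset_closure_image N.mkQL.continuous ⟨x, hLK (mem_univ x), rfl⟩

end Submodule

theorem separableSpace_quotient_of_le_comap {R U V : Type*} [Ring R] [AddCommGroup U]
    [TopologicalSpace U] [Module R U] [SeminormedAddCommGroup V] [Module R V] (T : U →L[R] V)
    {Y : Submodule R U} {Z : Submodule R V} [SeparableSpace (V ⧸ LinearMap.range T.toLinearMap)]
    [SeparableSpace (U ⧸ Y)] (hYZ : Y ≤ Z.comap T.toLinearMap) : SeparableSpace (V ⧸ Z) := by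
  let g := Y.liftQL (Z.mkQL.comp T) fun y hy ↦ (Submodule.Quotient.mk_eq_zero Z).2 (hYZ hy)
  refine Submodule.separableSpace_quotient_of_isSeparable_image (K := LinearMap.range T.toLinearMap)
    ((isSeparable_range g.continuous).mono ?_)
  rintro _ ⟨_, ⟨x, rfl⟩, rfl⟩
  exact ⟨Y.mkQ x, rfl⟩

theorem isSeparable_of_norm_mkQ_le_norm_sub {R U V : Type*} [Ring R] [SeminormedAddCommGroup U]
    [Module R U] [SeminormedAddCommGroup V] [Module R V] (T : U →L[R] V) {Y : Submodule R U}
    {Z : Submodule R V} [SeparableSpace (V ⧸ LinearMap.range T.toLinearMap)]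
    (hT : ∀ x, ‖T x‖ ≤ ‖x‖) (hZ : ∀ F ∈ Z, ∀ x, ‖Y.mkQ x‖ ≤ ‖F - T x‖)
    (hY : IsSeparable (Y : Set U)) : IsSeparable (Z : Set V) := by
  obtain ⟨L, hLZ, hL, hZL⟩ :=
    (LinearMap.range T.toLinearMap).exists_countable_subset_closure_add (S := Z)
      (.of_separableSpace _)
  refine (isSeparable_closure.2 (hL.isSeparable.add (hY.image T.continuous))).mono fun F hF ↦ ?_
  refine SeminormedAddCommGroup.mem_closure_iff.2 fun ε hε ↦ ?_
  obtain ⟨_, ⟨l, hlL, _, ⟨x, rfl⟩, rfl⟩, hlx⟩ :=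
    SeminormedAddCommGroup.mem_closure_iff.1 (hZL hF) (ε / 2) (half_pos hε)
  rw [ContinuousLinearMap.coe_coe, ← sub_sub] at hlx
  obtain ⟨y, hyY, hxy⟩ := Submodule.exists_mem_norm_sub_lt_of_norm_mkQ_lt
    ((hZ _ (Z.sub_mem hF (hLZ hlL)) x).trans_lt hlx)
  refine ⟨l + T y, add_mem_add hlL (mem_image_of_mem _ hyY), ?_⟩
  calc ‖F - (l + T y)‖ = ‖(F - l - T x) + T (x - y)‖ := by rw [map_sub]; abel_nf
    _ ≤ ‖F - l - T x‖ + ‖x - y‖ := (norm_add_le _ _).trans (add_le_add_right (hT _) _)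
    _ < ε := by linarith

section Bidual

variable {X : Type*} [NormedAddCommGroup X] [NormedSpace ℝ X] {Y : Submodule ℝ X}

theorem inclusionInDoubleDual_mem_annih_annih {y : X} (hy : y ∈ Y) :
    inclusionInDoubleDual ℝ X y ∈ annih (annih Y) :=
  fun _ hf ↦ hf y hy

theorem norm_mkQ_le_norm_sub_inclusionInDoubleDual {F : (X →L[ℝ] ℝ) →L[ℝ] ℝ}
    (hF : F ∈ annih (annih Y)) (x : X) : ‖Y.mkQ x‖ ≤ ‖F - inclusionInDoubleDual ℝ X x‖ := by
  obtain ⟨g, hg, hgx⟩ := exists_dual_vector'' ℝ (Y.mkQ x)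
  set f := g.comp Y.mkQL
  have hf : f ∈ annih Y := fun y hy ↦ by simp [f, (Submodule.Quotient.mk_eq_zero Y).2 hy]
  have hf1 : ‖f‖ ≤ 1 := by
    refine f.opNorm_le_bound zero_le_one fun v ↦ ?_
    calc ‖g (Y.mkQ v)‖ ≤ ‖g‖ * ‖Y.mkQ v‖ := g.le_opNorm _
      _ ≤ 1 * ‖v‖ := mul_le_mul hg (Submodule.Quotient.norm_mk_le Y v) (norm_nonneg _) zero_le_one
  set G := inclusionInDoubleDual ℝ X x - F
  calc ‖Y.mkQ x‖ = G f := by simpa [G, f, hF f hf] using hgx.symm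
    _ ≤ ‖G f‖ := le_abs_self _
    _ ≤ ‖G‖ * ‖f‖ := G.le_opNorm f
    _ ≤ ‖G‖ := mul_le_of_le_one_right (norm_nonneg G) hf1
    _ = ‖F - inclusionInDoubleDual ℝ X x‖ := norm_sub_rev (inclusionInDoubleDual ℝ X x) F

end Bidual

theorem biduals_of_coseparable_in_bidual_general
    {X : Type*} [NormedAddCommGroup X] [NormedSpace ℝ X]
    (hX : TopologicalSpace.SeparableSpace
      (((X →L[ℝ] ℝ) →L[ℝ] ℝ) ⧸ (LinearMap.range (inclusionInDoubleDual ℝ X).toLinearMap))) :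
    (∀ Y : Submodule ℝ X, IsClosed (Y : Set X) →
      TopologicalSpace.IsSeparable (Y : Set X) →
      TopologicalSpace.IsSeparable
        ((annih (annih Y) : Set ((X →L[ℝ] ℝ) →L[ℝ] ℝ)))) ∧
    (∀ Y : Submodule ℝ X, IsClosed (Y : Set X) →
      TopologicalSpace.SeparableSpace (X ⧸ Y) →
      TopologicalSpace.SeparableSpace
        (((X →L[ℝ] ℝ) →L[ℝ] ℝ) ⧸ (annih (annih Y)))) := by
  refine ⟨fun _ _ hY ↦ ?_, fun _ _ _ ↦ ?_⟩
  -- `by exact` postpones the two bounds until `T` is known; elaborated eagerly, unifying the two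
  -- instance paths on `X**` times out.
  · exact isSeparable_of_norm_mkQ_le_norm_sub (V := (X →L[ℝ] ℝ) →L[ℝ] ℝ)
      (inclusionInDoubleDual ℝ X) (fun x ↦ by exact double_dual_bound ℝ X x)
      (fun _ hF x ↦ by exact norm_mkQ_le_norm_sub_inclusionInDoubleDual hF x) hY
  · exact separableSpace_quotient_of_le_comap (inclusionInDoubleDual ℝ X)
      fun _ ↦ inclusionInDoubleDual_mem_annih_annih

/-- If `X` is coseparable in its bidual, then the double annihilator of a separable
closed subspace is norm-separable, and the double annihilator of a coseparable
closed subspace is coseparable in the bidual. -/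
theorem biduals_of_coseparable_in_bidual
    {X : Type*} [NormedAddCommGroup X] [NormedSpace ℝ X] [CompleteSpace X]
    (hX : TopologicalSpace.SeparableSpace
      (((X →L[ℝ] ℝ) →L[ℝ] ℝ) ⧸ (LinearMap.range (inclusionInDoubleDual ℝ X).toLinearMap))) :
    (∀ Y : Submodule ℝ X, IsClosed (Y : Set X) →
      TopologicalSpace.IsSeparable (Y : Set X) →
      TopologicalSpace.IsSeparable
        ((annih (annih Y) : Set ((X →L[ℝ] ℝ) →L[ℝ] ℝ)))) ∧
    (∀ Y : Submodule ℝ X, IsClosed (Y : Set X) →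
      TopologicalSpace.SeparableSpace (X ⧸ Y) →
      TopologicalSpace.SeparableSpace
        (((X →L[ℝ] ℝ) →L[ℝ] ℝ) ⧸ (annih (annih Y)))) :=
  biduals_of_coseparable_in_bidual_general hX
end

section
/- Let X be a Banach space, (x_α)_{α<κ} a transfinite basic sequence with constant C (i.e., ‖y‖ ≤ C‖y + z‖ for all y ∈ span{x_α : α < η}, z ∈ closed span{x_α : η ≤ α < κ}, and all η < κ), where κ is a regular uncountable cardinal, and let P_η denote the associated basis projections with ‖P_η‖ ≤ C. If C' = liminf_{η→κ} ‖P_η‖ is finite, then there is a cofinal subsequence (η_θ)_{θ<κ} with ‖P_{η_θ}‖ ≤ C' + 1 for all θ, and the corresponding subsequence (x_{α})_{α in the blocks determined by (η_θ)} forms a basic sequence with constant ≤ C' + 1. -/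
/-!
The ordinals `η < κ` with `‖P η‖ < C' + 1` are cofinal in `κ` because `C'` is the liminf.
Since `κ` is regular, any fewer than `κ` of them have an upper bound below `κ`, so their
increasing enumeration has length `κ`. Finally, `P η (y + z) = y` for `y` in the span of the
head and `z` in the closed span of the tail, so the basis constant at the cut `η` is at most `‖P η‖`.
-/

open Cardinal

theorem Ordinal.enumOrd_union_Ici_ord_lt {κ : Cardinal} (hκ : κ.IsRegular) {s : Set Ordinal}
    (hs : ∀ η < κ.ord, ∃ η', η ≤ η' ∧ η' < κ.ord ∧ η' ∈ s) {θ : Ordinal} (hθ : θ < κ.ord) :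
    enumOrd (s ∪ Set.Ici κ.ord) θ < κ.ord := by
  induction θ using WellFoundedLT.induction with | ind θ IH
  have hbound : ⨆ ι : Set.Iio θ, enumOrd (s ∪ Set.Ici κ.ord) ι + 1 < κ.ord := by
    refine lift_iSup_add_one_lt_of_lt_cof ?_ fun ι ↦ IH ι ι.2 (ι.2.trans hθ)
    rw [← lift_cof, hκ.cof_ord, Cardinal.mk_Iio_ordinal]
    simpa only [Cardinal.lift_lift, Cardinal.lift_lt] using lt_ord.mp hθ
  obtain ⟨η, hbη, hηκ, hηs⟩ := hs _ hbound
  refine (enumOrd_le_of_forall_lt (Or.inl hηs) fun ι hι ↦ ?_).trans_lt hηκ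
  exact (lt_iSup_add_one _ (⟨ι, hι⟩ : Set.Iio θ)).trans_le hbη

theorem Cardinal.IsRegular.exists_strictMono_enum_cofinal {κ : Cardinal} (hκ : κ.IsRegular)
    {p : Ordinal → Prop} (hp : ∀ η < κ.ord, ∃ η', η ≤ η' ∧ η' < κ.ord ∧ p η') :
    ∃ f : Ordinal → Ordinal, StrictMono f ∧ (∀ θ < κ.ord, f θ < κ.ord) ∧
      (∀ η < κ.ord, ∃ θ < κ.ord, η ≤ f θ) ∧ ∀ θ < κ.ord, p (f θ) := by
  set s := {η | p η} ∪ Set.Ici κ.ord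
  have hs : ¬ BddAbove s := fun h ↦ not_bddAbove_Ici κ.ord (h.mono Set.subset_union_right)
  have hlt : ∀ θ < κ.ord, Ordinal.enumOrd s θ < κ.ord :=
    fun θ ↦ Ordinal.enumOrd_union_Ici_ord_lt hκ hp
  refine ⟨Ordinal.enumOrd s, Ordinal.enumOrd_strictMono hs, hlt,
    fun η hη ↦ ⟨η, hη, Ordinal.le_enumOrd_self hs⟩, fun θ hθ ↦ ?_⟩
  exact (Ordinal.enumOrd_mem hs θ).resolve_right (hlt θ hθ).not_ge

section Projection

variable {𝕜 E F : Type*} [NontriviallyNormedField 𝕜]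
  [SeminormedAddCommGroup E] [NormedSpace 𝕜 E] [SeminormedAddCommGroup F] [NormedSpace 𝕜 F]

theorem ContinuousLinearMap.map_eq_zero_of_mem_closure_span [T1Space F] (T : E →L[𝕜] F)
    {s : Set E} (hs : ∀ v ∈ s, T v = 0) {z : E}
    (hz : z ∈ (Submodule.span 𝕜 s).topologicalClosure) : T z = 0 := by
  have hker : (Submodule.span 𝕜 s).topologicalClosure ≤ LinearMap.ker (T : E →ₗ[𝕜] F) :=
    Submodule.topologicalClosure_minimal _ (Submodule.span_le.mpr hs) T.isClosed_ker
  exact hker hz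

theorem ContinuousLinearMap.norm_le_opNorm_mul_norm_add (P : E →L[𝕜] E) {y z : E}
    (hy : P y = y) (hz : P z = 0) : ‖y‖ ≤ ‖P‖ * ‖y + z‖ := by
  simpa only [map_add, hy, hz, add_zero] using P.le_opNorm (y + z)

end Projection

theorem basis_projection_liminf_stabilization_general
    {X : Type*} [NormedAddCommGroup X] [NormedSpace ℝ X]
    (κ : Cardinal) (hreg : κ.IsRegular)
    (x : Ordinal → X)
    (P : Ordinal → (X →L[ℝ] X))
    (hPfix : ∀ η < κ.ord, ∀ y ∈ Submodule.span ℝ {v | ∃ α < η, v = x α}, P η y = y)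
    (hPker : ∀ η < κ.ord, ∀ α, η ≤ α → α < κ.ord → P η (x α) = 0)
    (C' : ℝ)
    (hliminf : ∀ ε > 0,
      (∀ η < κ.ord, ∃ η', η ≤ η' ∧ η' < κ.ord ∧ ‖P η'‖ < C' + ε) ∧
      (∃ η < κ.ord, ∀ η', η ≤ η' → η' < κ.ord → C' - ε < ‖P η'‖)) :
    ∃ f : Ordinal → Ordinal, StrictMono f ∧
      (∀ θ < κ.ord, f θ < κ.ord) ∧
      (∀ η < κ.ord, ∃ θ < κ.ord, η ≤ f θ) ∧
      (∀ θ < κ.ord, ‖P (f θ)‖ ≤ C' + 1) ∧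
      (∀ θ < κ.ord,
        ∀ y ∈ Submodule.span ℝ {v | ∃ α < f θ, v = x α},
        ∀ z ∈ (Submodule.span ℝ
            {v | ∃ α, f θ ≤ α ∧ α < κ.ord ∧ v = x α}).topologicalClosure,
          ‖y‖ ≤ (C' + 1) * ‖y + z‖) := by
  obtain ⟨f, hf_mono, hf_lt, hf_cofinal, hf_small⟩ :=
    hreg.exists_strictMono_enum_cofinal (hliminf 1 one_pos).1
  have hf_norm : ∀ θ < κ.ord, ‖P (f θ)‖ ≤ C' + 1 := fun θ hθ ↦ (hf_small θ hθ).le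
  refine ⟨f, hf_mono, hf_lt, hf_cofinal, hf_norm, fun θ hθ y hy z hz ↦ ?_⟩
  have hPz : P (f θ) z = 0 := by
    refine (P (f θ)).map_eq_zero_of_mem_closure_span ?_ hz
    rintro _ ⟨α, hfα, hακ, rfl⟩
    exact hPker _ (hf_lt θ hθ) α hfα hακ
  calc ‖y‖ ≤ ‖P (f θ)‖ * ‖y + z‖ :=
        (P (f θ)).norm_le_opNorm_mul_norm_add (hPfix _ (hf_lt θ hθ) y hy) hPz
    _ ≤ (C' + 1) * ‖y + z‖ := by gcongr; exact hf_norm θ hθ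

/-- Stabilizing the basis projection constants of a transfinite basic sequence of
regular uncountable length along a cofinal subsequence. -/
theorem basis_projection_liminf_stabilization
    {X : Type*} [NormedAddCommGroup X] [NormedSpace ℝ X] [CompleteSpace X]
    (κ : Cardinal) (hreg : κ.IsRegular) (hunc : ℵ₀ < κ)
    (x : Ordinal → X) (hx : ∀ α < κ.ord, x α ≠ 0)
    (C : ℝ) (hC : 1 ≤ C)
    (hbasic : ∀ η < κ.ord,
      ∀ y ∈ Submodule.span ℝ {v | ∃ α < η, v = x α},
      ∀ z ∈ (Submodule.span ℝ {v | ∃ α, η ≤ α ∧ α < κ.ord ∧ v = x α}).topologicalClosure,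
        ‖y‖ ≤ C * ‖y + z‖)
    (P : Ordinal → (X →L[ℝ] X))
    (hPnorm : ∀ η < κ.ord, ‖P η‖ ≤ C)
    (hPfix : ∀ η < κ.ord, ∀ y ∈ Submodule.span ℝ {v | ∃ α < η, v = x α}, P η y = y)
    (hPker : ∀ η < κ.ord, ∀ α, η ≤ α → α < κ.ord → P η (x α) = 0)
    (C' : ℝ)
    (hliminf : ∀ ε > 0,
      (∀ η < κ.ord, ∃ η', η ≤ η' ∧ η' < κ.ord ∧ ‖P η'‖ < C' + ε) ∧
      (∃ η < κ.ord, ∀ η', η ≤ η' → η' < κ.ord → C' - ε < ‖P η'‖)) :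
    ∃ f : Ordinal → Ordinal, StrictMono f ∧
      (∀ θ < κ.ord, f θ < κ.ord) ∧
      (∀ η < κ.ord, ∃ θ < κ.ord, η ≤ f θ) ∧
      (∀ θ < κ.ord, ‖P (f θ)‖ ≤ C' + 1) ∧
      (∀ θ < κ.ord,
        ∀ y ∈ Submodule.span ℝ {v | ∃ α < f θ, v = x α},
        ∀ z ∈ (Submodule.span ℝ
            {v | ∃ α, f θ ≤ α ∧ α < κ.ord ∧ v = x α}).topologicalClosure,
          ‖y‖ ≤ (C' + 1) * ‖y + z‖) :=
  basis_projection_liminf_stabilization_general κ hreg x P hPfix hPker C' hliminf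
end

section
/- Let X be a Banach space with a biorthogonal system ((x_β, f_β))_{β<κ} where κ is a regular uncountable cardinal, such that every f ∈ X* has countable support on the x_β's, and suppose the closed span of {x_β : β < κ} is X. If (z_σ)_{σ<κ} ⊂ X is a family such that z_σ → 0 weakly as σ → κ (i.e., for every f ∈ X*, f(z_σ) → 0 along the order on κ) and each z_σ lies in the closed span of countably many x_β's, then there is a subsequence (z_{σ_θ})_{θ<κ} whose supports (with respect to the biorthogonal functionals) are pairwise disjoint, and in fact successive: sup supp(z_{σ_{θ₁}}) < inf supp(z_{σ_{θ₂}}) for θ₁ < θ₂. -/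
/-!
A real net indexed by the ordinals below `κ.ord` that tends to `0` is eventually `0`, because
`κ` has uncountable cofinality; and since `κ` is regular, fewer than `κ` statements each holding
on a tail of `κ.ord` hold together on a common tail. So for every `γ < κ.ord` the supports of
`z σ` lie above `γ` from some `σ` on, while each support, being countable, is bounded below
`κ.ord`. The subsequence is then chosen by transfinite recursion: at stage `θ`, bound the supports
of the terms already chosen by some `γ < κ.ord` (regularity again) and pick the next index past
the tail for `γ`.
-/

open Cardinal Ordinal Set

universe u v

section RegularCardinal

variable {κ : Cardinal.{u}}

def EventuallyBelow (o : Ordinal.{u}) (P : Ordinal.{u} → Prop) : Prop :=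
  ∃ σ₀ < o, ∀ σ, σ₀ < σ → σ < o → P σ

theorem Cardinal.lift_mk_Iio_lt_of_lt_ord {θ : Ordinal.{u}} (hθ : θ < κ.ord) :
    Cardinal.lift.{u} #(Iio θ) < Cardinal.lift.{u + 1} κ := by
  simpa [← Ordinal.lift_card] using lt_ord.1 hθ

theorem Cardinal.IsRegular.iSup_lt_ord {ι : Type v} (hκ : κ.IsRegular)
    (hι : Cardinal.lift.{u} #ι < Cardinal.lift.{v} κ) {g : ι → Ordinal.{u}}
    (hg : ∀ i, g i < κ.ord) : ⨆ i, g i < κ.ord :=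
  Ordinal.lift_iSup_lt_of_lt_cof (by rwa [← Ordinal.lift_cof, hκ.cof_ord]) hg

theorem eventuallyBelow_all_of_isRegular (hκ : κ.IsRegular) {ι : Type v}
    (hι : Cardinal.lift.{u} #ι < Cardinal.lift.{v} κ) {P : ι → Ordinal.{u} → Prop}
    (h : ∀ i, EventuallyBelow κ.ord (P i)) : EventuallyBelow κ.ord fun σ => ∀ i, P i σ := by
  choose σ₀ hσ₀ hP using h
  exact ⟨⨆ i, σ₀ i, hκ.iSup_lt_ord hι hσ₀, fun σ hσ hσκ i =>
    hP i σ ((le_ciSup ⟨κ.ord, forall_mem_range.2 fun j => (hσ₀ j).le⟩ i).trans_lt hσ) hσκ⟩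

theorem eventuallyBelow_eq_zero_of_forall_abs_lt (hκ : κ.IsRegular) (hunc : ℵ₀ < κ)
    {φ : Ordinal.{u} → ℝ} (h : ∀ ε > 0, EventuallyBelow κ.ord fun σ => |φ σ| < ε) :
    EventuallyBelow κ.ord fun σ => φ σ = 0 := by
  obtain ⟨σ₀, hσ₀, hsmall⟩ := eventuallyBelow_all_of_isRegular hκ (ι := ℕ) (by simpa using hunc)
    fun n => h (1 / (n + 1)) Nat.one_div_pos_of_nat
  refine ⟨σ₀, hσ₀, fun σ hσ hσκ => by_contra fun hne => ?_⟩
  obtain ⟨n, hn⟩ := exists_nat_one_div_lt (abs_pos.2 hne)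
  exact lt_asymm hn (hsmall σ hσ hσκ n)

theorem exists_lt_ord_forall_lt_of_countable (hκ : κ.IsRegular) (hunc : ℵ₀ < κ)
    {S : Set Ordinal.{u}} (hS : S.Countable) (hSκ : ∀ β ∈ S, β < κ.ord) :
    ∃ d < κ.ord, ∀ β ∈ S, β < d := by
  have : Countable S := hS.to_subtype
  refine ⟨⨆ β : S, (β : Ordinal) + 1, ?_, fun β hβ => ?_⟩
  · refine hκ.iSup_lt_ord ?_ fun β => (isSuccLimit_ord hκ.aleph0_le).add_one_lt (hSκ β β.2)
    calc Cardinal.lift.{u} #S ≤ ℵ₀ := lift_le_aleph0.2 (le_aleph0_iff_set_countable.2 hS)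
      _ < Cardinal.lift.{u + 1} κ := by simpa using hunc
  · exact (lt_add_one β).trans_le (Ordinal.le_iSup (fun β : S => (β : Ordinal) + 1) ⟨β, hβ⟩)

theorem exists_strictMono_interleaving (hκ : κ.IsRegular) (D T : Ordinal.{u} → Ordinal.{u})
    (hD : ∀ σ < κ.ord, D σ < κ.ord) (hT : ∀ γ < κ.ord, T γ < κ.ord) :
    ∃ s : Ordinal → Ordinal, StrictMono s ∧ (∀ θ < κ.ord, s θ < κ.ord) ∧
      ∀ θ₁ θ₂, θ₁ < θ₂ → θ₂ < κ.ord → ∃ γ < κ.ord, D (s θ₁) ≤ γ ∧ T γ < s θ₂ := by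
  obtain ⟨s, hs⟩ : ∃ s : Ordinal.{u} → Ordinal.{u}, ∀ θ, s θ =
      max (T (⨆ θ' : Iio θ, max (D (s θ')) (s θ'))) (⨆ θ' : Iio θ, max (D (s θ')) (s θ')) + 1 :=
    ⟨Ordinal.lt_wf.fix fun θ s =>
      max (T (⨆ θ' : Iio θ, max (D (s θ' θ'.2)) (s θ' θ'.2)))
        (⨆ θ' : Iio θ, max (D (s θ' θ'.2)) (s θ' θ'.2)) + 1,
      fun θ => Ordinal.lt_wf.fix_eq _ θ⟩
  set γ : Ordinal.{u} → Ordinal.{u} := fun θ => ⨆ θ' : Iio θ, max (D (s θ')) (s θ')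
  have le_γ : ∀ θ' θ, θ' < θ → max (D (s θ')) (s θ') ≤ γ θ := fun θ' θ h =>
    Ordinal.le_iSup (fun θ' : Iio θ => max (D (s θ')) (s θ')) ⟨θ', h⟩
  have T_lt : ∀ θ, T (γ θ) < s θ := fun θ => by
    rw [hs θ]; exact Order.lt_add_one_iff.2 (le_max_left _ _)
  have γ_lt : ∀ θ, γ θ < s θ := fun θ => by
    rw [hs θ]; exact Order.lt_add_one_iff.2 (le_max_right _ _)
  have hlim := isSuccLimit_ord hκ.aleph0_le
  have bound : ∀ θ < κ.ord, s θ < κ.ord ∧ γ θ < κ.ord := by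
    intro θ hθ
    induction θ using WellFoundedLT.induction with
    | _ θ ih =>
    have hγθ : γ θ < κ.ord := hκ.iSup_lt_ord (lift_mk_Iio_lt_of_lt_ord hθ) fun θ' =>
      max_lt (hD _ (ih θ' θ'.2 (θ'.2.trans hθ)).1) (ih θ' θ'.2 (θ'.2.trans hθ)).1
    refine ⟨?_, hγθ⟩
    rw [hs θ]
    exact hlim.add_one_lt (max_lt (hT _ hγθ) hγθ)
  refine ⟨s, fun θ' θ h => ?_, fun θ hθ => (bound θ hθ).1, fun θ₁ θ₂ h hθ₂ => ?_⟩
  · exact ((le_max_right _ _).trans (le_γ θ' θ h)).trans_lt (γ_lt θ)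
  · exact ⟨γ θ₂, (bound θ₂ hθ₂).2, (le_max_left _ _).trans (le_γ θ₁ θ₂ h), T_lt θ₂⟩

theorem exists_strictMono_successive_supports (hκ : κ.IsRegular)
    (supp : Ordinal.{u} → Set Ordinal.{u})
    (hbdd : ∀ σ < κ.ord, ∃ d < κ.ord, ∀ β ∈ supp σ, β < d)
    (htail : ∀ γ < κ.ord, EventuallyBelow κ.ord fun σ => ∀ β ∈ supp σ, γ ≤ β) :
    ∃ s : Ordinal → Ordinal, StrictMono s ∧ (∀ θ < κ.ord, s θ < κ.ord) ∧
      ∀ θ₁ θ₂, θ₁ < θ₂ → θ₂ < κ.ord → ∀ β₁ ∈ supp (s θ₁), ∀ β₂ ∈ supp (s θ₂), β₁ < β₂ := by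
  choose! D hDκ hD using hbdd
  choose! T hTκ hT using htail
  obtain ⟨s, hmono, hsκ, hinter⟩ := exists_strictMono_interleaving hκ D T hDκ hTκ
  refine ⟨s, hmono, hsκ, fun θ₁ θ₂ h hθ₂ β₁ hβ₁ β₂ hβ₂ => ?_⟩
  obtain ⟨γ, hγ, hDγ, hTγ⟩ := hinter θ₁ θ₂ h hθ₂
  calc β₁ < D (s θ₁) := hD _ (hsκ θ₁ (h.trans hθ₂)) β₁ hβ₁
    _ ≤ γ := hDγ
    _ ≤ β₂ := hT γ hγ (s θ₂) hTγ (hsκ θ₂ hθ₂) β₂ hβ₂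

end RegularCardinal

theorem successive_supports_subsequence_general
    {X : Type*} [NormedAddCommGroup X] [NormedSpace ℝ X]
    (κ : Cardinal) (hreg : κ.IsRegular) (hunc : ℵ₀ < κ)
    (f : Ordinal → (X →L[ℝ] ℝ))
    (z : Ordinal → X)
    (hweak : ∀ g : X →L[ℝ] ℝ, ∀ ε > (0:ℝ), ∃ σ₀ < κ.ord,
      ∀ σ, σ₀ < σ → σ < κ.ord → |g (z σ)| < ε)
    (hzcnt : ∀ σ < κ.ord, {β | β < κ.ord ∧ f β (z σ) ≠ 0}.Countable) :
    ∃ s : Ordinal → Ordinal, StrictMono s ∧ (∀ θ < κ.ord, s θ < κ.ord) ∧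
      ∀ θ₁ θ₂, θ₁ < θ₂ → θ₂ < κ.ord →
        ∀ β₁ β₂, β₁ < κ.ord → β₂ < κ.ord →
          f β₁ (z (s θ₁)) ≠ 0 → f β₂ (z (s θ₂)) ≠ 0 → β₁ < β₂ := by
  have hcoord : ∀ β, EventuallyBelow κ.ord fun σ => f β (z σ) = 0 := fun β =>
    eventuallyBelow_eq_zero_of_forall_abs_lt hreg hunc (hweak (f β))
  have htail : ∀ γ < κ.ord, EventuallyBelow κ.ord
      fun σ => ∀ β ∈ {β | β < κ.ord ∧ f β (z σ) ≠ 0}, γ ≤ β := by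
    intro γ hγ
    obtain ⟨σ₀, hσ₀, hvanish⟩ := eventuallyBelow_all_of_isRegular hreg
      (lift_mk_Iio_lt_of_lt_ord hγ) fun β : Iio γ => hcoord β
    exact ⟨σ₀, hσ₀, fun σ hσ hσκ β ⟨_, hβ⟩ =>
      not_lt.1 fun hβγ => hβ (hvanish σ hσ hσκ ⟨β, hβγ⟩)⟩
  obtain ⟨s, hmono, hsκ, hsucc⟩ := exists_strictMono_successive_supports hreg _
    (fun σ hσ => exists_lt_ord_forall_lt_of_countable hreg hunc (hzcnt σ hσ) fun _ h => h.1) htail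
  exact ⟨s, hmono, hsκ, fun θ₁ θ₂ h hθ₂ β₁ β₂ hβ₁ hβ₂ hne₁ hne₂ =>
    hsucc θ₁ θ₂ h hθ₂ β₁ ⟨hβ₁, hne₁⟩ β₂ ⟨hβ₂, hne₂⟩⟩

/-- From a weakly null transfinite sequence of countably supported vectors with
respect to a countably supporting M-basis of regular uncountable length one can
extract a subsequence with successive (pairwise disjoint) supports. -/
theorem successive_supports_subsequence
    {X : Type*} [NormedAddCommGroup X] [NormedSpace ℝ X] [CompleteSpace X]
    (κ : Cardinal) (hreg : κ.IsRegular) (hunc : ℵ₀ < κ)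
    (x : Ordinal → X) (f : Ordinal → (X →L[ℝ] ℝ))
    (hbi : ∀ α < κ.ord, ∀ β < κ.ord, f α (x β) = if α = β then 1 else 0)
    (hcnt : ∀ g : X →L[ℝ] ℝ, {β | β < κ.ord ∧ g (x β) ≠ 0}.Countable)
    (hspan : (Submodule.span ℝ {v | ∃ β < κ.ord, v = x β}).topologicalClosure = ⊤)
    (z : Ordinal → X)
    (hweak : ∀ g : X →L[ℝ] ℝ, ∀ ε > (0:ℝ), ∃ σ₀ < κ.ord,
      ∀ σ, σ₀ < σ → σ < κ.ord → |g (z σ)| < ε)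
    (hzcnt : ∀ σ < κ.ord, {β | β < κ.ord ∧ f β (z σ) ≠ 0}.Countable) :
    ∃ s : Ordinal → Ordinal, StrictMono s ∧ (∀ θ < κ.ord, s θ < κ.ord) ∧
      ∀ θ₁ θ₂, θ₁ < θ₂ → θ₂ < κ.ord →
        ∀ β₁ β₂, β₁ < κ.ord → β₂ < κ.ord →
          f β₁ (z (s θ₁)) ≠ 0 → f β₂ (z (s θ₂)) ≠ 0 → β₁ < β₂ :=
  successive_supports_subsequence_general κ hreg hunc f z hweak hzcnt
end
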